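/- arXiv:1705.00763 — 3 statements merged into one kernel-verified Lean document; each statement's English description precedes it below -/
import Mathlib

section
/- Let A ∈ ℝ^{m×n} have all entries nonnegative, and suppose the map ψ_A : {0,1}^n → {0,1}^m given by ψ_A(x) = (sign((Ax)_i))_i is injective on supports, i.e., ψ_A(x_1) ≠ ψ_A(x_2) whenever x_1, x_2 ∈ {0,1}^n are both k-sparse with supp(x_1) ≠ supp(x_2). Then the family B_1, ..., B_n with B_j = {i : A_{ij} > 0} is an (n,m,k−1)-union free family: for all distinct j_0, j_1, ..., j_{k−1} ∈ [n], B_{j_0} is not contained in B_{j_1} ∪ ... ∪ B_{j_{k−1}}. -/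
/-- If a nonnegative matrix's 1-bit measurements distinguish the supports of
all k-sparse 0-1 vectors, then the column supports form an (n,m,k-1)-union free family. -/
theorem support_recovery_nonneg_implies_uff
    (n m k : ℕ) (hk : 0 < k)
    (A : Matrix (Fin m) (Fin n) ℝ)
    (hA : ∀ i j, 0 ≤ A i j)
    (hrec : ∀ x₁ x₂ : Fin n → ℝ,
      (∀ j, x₁ j = 0 ∨ x₁ j = 1) → (∀ j, x₂ j = 0 ∨ x₂ j = 1) →
      (Finset.univ.filter fun j => x₁ j ≠ 0).card ≤ k →
      (Finset.univ.filter fun j => x₂ j ≠ 0).card ≤ k →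
      {j | x₁ j ≠ 0} ≠ {j | x₂ j ≠ 0} →
      (fun i => Real.sign (A.mulVec x₁ i)) ≠ (fun i => Real.sign (A.mulVec x₂ i))) :
    ∀ (j₀ : Fin n) (js : Fin (k - 1) → Fin n),
      Function.Injective js → (∀ i, js i ≠ j₀) →
      ¬ ((Finset.univ.filter fun i : Fin m => 0 < A i j₀) ⊆
          Finset.univ.biUnion fun t : Fin (k - 1) =>
            Finset.univ.filter fun i : Fin m => 0 < A i (js t)) := by
  intro j₀ js hinj hne hsub
  set S : Finset (Fin n) := Finset.univ.image js with hS
  have hj₀S : j₀ ∉ S := by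
    simp only [hS, Finset.mem_image]
    rintro ⟨t, -, ht⟩
    exact hne t ht
  have hcardS : S.card = k - 1 := by
    rw [hS, Finset.card_image_of_injective _ hinj, Finset.card_univ, Fintype.card_fin]
  set x₁ : Fin n → ℝ := fun j => if j ∈ S then 1 else 0 with hx₁
  set x₂ : Fin n → ℝ := fun j => if j ∈ insert j₀ S then 1 else 0 with hx₂
  have h01₁ : ∀ j, x₁ j = 0 ∨ x₁ j = 1 := by
    intro j; simp only [hx₁]; split <;> simp
  have h01₂ : ∀ j, x₂ j = 0 ∨ x₂ j = 1 := by
    intro j; simp only [hx₂]; split <;> simp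
  have hfilt₁ : (Finset.univ.filter fun j => x₁ j ≠ 0) = S := by
    ext j; simp only [Finset.mem_filter, Finset.mem_univ, true_and, hx₁]
    split <;> simp_all
  have hfilt₂ : (Finset.univ.filter fun j => x₂ j ≠ 0) = insert j₀ S := by
    ext j; simp only [Finset.mem_filter, Finset.mem_univ, true_and, hx₂]
    split <;> simp_all
  have hc₁ : (Finset.univ.filter fun j => x₁ j ≠ 0).card ≤ k := by
    rw [hfilt₁, hcardS]; omega
  have hc₂ : (Finset.univ.filter fun j => x₂ j ≠ 0).card ≤ k := by
    rw [hfilt₂, Finset.card_insert_of_notMem hj₀S, hcardS]; omega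
  have hsupp : {j | x₁ j ≠ 0} ≠ {j | x₂ j ≠ 0} := by
    intro h
    have h1 : j₀ ∈ {j | x₂ j ≠ 0} := by
      simp [hx₂]
    rw [← h] at h1
    simp only [Set.mem_setOf_eq, hx₁] at h1
    rw [if_neg hj₀S] at h1
    exact h1 rfl
  -- show the sign vectors agree
  apply hrec x₁ x₂ h01₁ h01₂ hc₁ hc₂ hsupp
  funext i
  have hx₂eq : ∀ j, x₂ j = x₁ j + (if j = j₀ then 1 else 0) := by
    intro j
    by_cases hj : j = j₀
    · subst hj
      simp [hx₁, hx₂, hj₀S]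
    · simp [hx₁, hx₂, hj, Finset.mem_insert]
  have hmv : A.mulVec x₂ i = A.mulVec x₁ i + A i j₀ := by
    simp only [Matrix.mulVec, dotProduct]
    have : ∀ j, A i j * x₂ j = A i j * x₁ j + (if j = j₀ then A i j else 0) := by
      intro j
      rw [hx₂eq j]
      ring_nf
      split <;> ring
    rw [Finset.sum_congr rfl fun j _ => this j, Finset.sum_add_distrib]
    simp
  have hnn₁ : 0 ≤ A.mulVec x₁ i := by
    simp only [Matrix.mulVec, dotProduct]
    apply Finset.sum_nonneg
    intro j _
    have := hA i j
    have : (0:ℝ) ≤ x₁ j := by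
      rcases h01₁ j with h | h <;> rw [h] <;> norm_num
    positivity
  by_cases hpos : 0 < A i j₀
  · -- then i is in some B_{js t}, so A.mulVec x₁ i > 0
    have hi : i ∈ Finset.univ.biUnion fun t : Fin (k - 1) =>
        Finset.univ.filter fun i : Fin m => 0 < A i (js t) := by
      apply hsub
      simp [hpos]
    rw [Finset.mem_biUnion] at hi
    obtain ⟨t, -, ht⟩ := hi
    rw [Finset.mem_filter] at ht
    have hterm : 0 < A i (js t) * x₁ (js t) := by
      have : x₁ (js t) = 1 := by simp [hx₁, hS]
      rw [this, mul_one]; exact ht.2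
    have hpos₁ : 0 < A.mulVec x₁ i := by
      simp only [Matrix.mulVec, dotProduct]
      refine lt_of_lt_of_le hterm ?_
      apply Finset.single_le_sum (f := fun j => A i j * x₁ j) _ (Finset.mem_univ (js t))
      intro j _
      have := hA i j
      have : (0:ℝ) ≤ x₁ j := by
        rcases h01₁ j with h | h <;> rw [h] <;> norm_num
      positivity
    have hpos₂ : 0 < A.mulVec x₂ i := by rw [hmv]; linarith
    rw [Real.sign_of_pos hpos₁, Real.sign_of_pos hpos₂]
  · have hz : A i j₀ = 0 := le_antisymm (not_lt.mp hpos) (hA i j₀)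
    rw [hmv, hz, add_zero]
end

section
/- Let A ∈ ℝ^{m×n} with all entries in [−1,1], and for each j ∈ [n] let B_j = {i ∈ [m] : A_{ij} ≠ 0}. Suppose there exist distinct j_0, j_1, ..., j_{k−1} ∈ [n] with B_{j_0} ⊆ B_{j_1} ∪ ... ∪ B_{j_{k−1}}. Then there exist k-sparse vectors x_1, x_2 ∈ ℝ^n with supp(x_1) ≠ supp(x_2) but sign(Ax_1) = sign(Ax_2) (entrywise). Hence any matrix for which sign(A·) distinguishes all supports of k-sparse real vectors yields an (n,m,k−1)-union free family {B_1,...,B_n}. -/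
lemma sign_add_of_abs_lt {a b : ℝ} (h : |b| < |a|) :
    Real.sign (a + b) = Real.sign a := by
  rcases lt_trichotomy a 0 with ha | ha | ha
  · rw [Real.sign_of_neg ha, Real.sign_of_neg]
    have := abs_lt.mp h
    have : |a| = -a := abs_of_neg ha
    linarith [abs_lt.mp h |>.1, abs_lt.mp h |>.2, this ▸ h]
  · subst ha; simp at h; linarith [abs_nonneg b]
  · rw [Real.sign_of_pos ha, Real.sign_of_pos]
    have h1 := abs_lt.mp ((abs_of_pos ha) ▸ h)
    linarith [h1.1]

lemma exists_generic {ι : Type*} [DecidableEq ι] (d : ℕ) (c : ι → Fin d → ℝ) (s : Finset ι)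
    (hc : ∀ i ∈ s, ∃ t, c i t ≠ 0) :
    ∃ y : Fin d → ℝ, ∀ i ∈ s, ∑ t, c i t * y t ≠ 0 := by
  classical
  induction s using Finset.induction_on with
  | empty => exact ⟨0, by simp⟩
  | @insert a s ha ih =>
    obtain ⟨y, hy⟩ := ih (fun i hi => hc i (Finset.mem_insert_of_mem hi))
    obtain ⟨t₀, ht₀⟩ := hc a (Finset.mem_insert_self a s)
    set Sf : ι → ℝ := fun i => ∑ t, c i t * y t with hSf
    set badval : ι → ℝ := fun i => -(Sf i) / c i t₀ with hbv
    obtain ⟨r, hr⟩ := Infinite.exists_notMem_finset ((insert a s).image badval)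
    refine ⟨fun t => y t + if t = t₀ then r else 0, ?_⟩
    have hcomp : ∀ i, ∑ t, c i t * (y t + if t = t₀ then r else 0)
        = Sf i + c i t₀ * r := by
      intro i
      simp [mul_add, Finset.sum_add_distrib, mul_ite, mul_zero, hSf]
    have key : ∀ i ∈ insert a s, c i t₀ ≠ 0 → Sf i + c i t₀ * r ≠ 0 := by
      intro i hi hci h0
      apply hr
      refine Finset.mem_image.mpr ⟨i, hi, ?_⟩
      rw [hbv]
      field_simp
      linarith
    intro i hi
    rw [hcomp]
    rcases Finset.mem_insert.mp hi with rfl | his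
    · exact key i hi ht₀
    · by_cases hci : c i t₀ = 0
      · simpa [hci] using hy i his
      · exact key i hi hci

/-- If the column supports of a matrix with entries in [-1,1] fail the
union-free condition, then two k-sparse vectors with different supports have identical
sign measurements (hence support-distinguishing matrices yield union free families). -/
theorem uff_violation_implies_confusable_vectors
    (n m k : ℕ) (hk : 0 < k)
    (A : Matrix (Fin m) (Fin n) ℝ)
    (hA : ∀ i j, |A i j| ≤ 1)
    (B : Fin n → Finset (Fin m))
    (hB : ∀ j, B j = Finset.univ.filter fun i => A i j ≠ 0) :
    (∃ (j₀ : Fin n) (js : Fin (k - 1) → Fin n),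
        Function.Injective js ∧ (∀ i, js i ≠ j₀) ∧
        B j₀ ⊆ Finset.univ.biUnion fun t => B (js t)) →
    ∃ x₁ x₂ : Fin n → ℝ,
      (Finset.univ.filter fun j => x₁ j ≠ 0).card ≤ k ∧
      (Finset.univ.filter fun j => x₂ j ≠ 0).card ≤ k ∧
      {j | x₁ j ≠ 0} ≠ {j | x₂ j ≠ 0} ∧
      (∀ i, Real.sign (A.mulVec x₁ i) = Real.sign (A.mulVec x₂ i)) := by
  classical
  rintro ⟨j₀, js, hinj, hne, hsub⟩
  set S : Finset (Fin m) := Finset.univ.biUnion fun t => B (js t) with hS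
  -- membership facts
  have hmemS : ∀ i ∈ S, ∃ t, A i (js t) ≠ 0 := by
    intro i hi
    obtain ⟨t, _, ht⟩ := Finset.mem_biUnion.mp hi
    exact ⟨t, by simpa [hB] using ht⟩
  have hnotS : ∀ i, i ∉ S → (∀ t, A i (js t) = 0) ∧ A i j₀ = 0 := by
    intro i hi
    constructor
    · intro t
      by_contra h
      exact hi (Finset.mem_biUnion.mpr ⟨t, Finset.mem_univ t, by simp [hB, h]⟩)
    · by_contra h
      exact hi (hsub (by simp [hB, h]))
  obtain ⟨y, hy⟩ := exists_generic (k-1) (fun i t => A i (js t)) S hmemS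
  set x₂ : Fin n → ℝ := fun j => ∑ t, if j = js t then y t else 0 with hx2def
  have hx2 : ∀ i, A.mulVec x₂ i = ∑ t, A i (js t) * y t := by
    intro i
    simp only [Matrix.mulVec, dotProduct, hx2def, Finset.mul_sum, mul_ite, mul_zero]
    rw [Finset.sum_comm]
    refine Finset.sum_congr rfl fun t _ => ?_
    rw [Finset.sum_ite_eq' Finset.univ (js t) (fun j => A i j * y t)]
    simp
  have hx2zero : ∀ j, (∀ t, j ≠ js t) → x₂ j = 0 := by
    intro j hj
    simp only [hx2def]
    exact Finset.sum_eq_zero fun t _ => by simp [hj t]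
  have hSne : ∀ i ∈ S, A.mulVec x₂ i ≠ 0 := fun i hi => by rw [hx2]; exact hy i hi
  set ε : ℝ := if h : S.Nonempty then (S.inf' h fun i => |A.mulVec x₂ i|) / 2 else 1 with hεdef
  have hε : 0 < ε := by
    rw [hεdef]
    split
    · next h =>
      have : 0 < S.inf' h fun i => |A.mulVec x₂ i| :=
        (Finset.lt_inf'_iff h).mpr fun i hi => abs_pos.mpr (hSne i hi)
      linarith
    · norm_num
  have hεlt : ∀ i ∈ S, ε < |A.mulVec x₂ i| := by
    intro i hi
    rw [hεdef, dif_pos ⟨i, hi⟩]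
    have h1 := Finset.inf'_le (fun i => |A.mulVec x₂ i|) hi
    have h2 : 0 < S.inf' ⟨i, hi⟩ fun i => |A.mulVec x₂ i| :=
      (Finset.lt_inf'_iff _).mpr fun i hi => abs_pos.mpr (hSne i hi)
    linarith
  set x₁ : Fin n → ℝ := fun j => x₂ j + if j = j₀ then ε else 0 with hx1def
  have hx1 : ∀ i, A.mulVec x₁ i = A.mulVec x₂ i + A i j₀ * ε := by
    intro i
    simp only [Matrix.mulVec, dotProduct, hx1def, mul_add, Finset.sum_add_distrib,
      mul_ite, mul_zero]
    rw [Finset.sum_ite_eq' Finset.univ j₀ (fun j => A i j * ε)]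
    simp
  have hx2j₀ : x₂ j₀ = 0 := hx2zero j₀ fun t => (hne t).symm
  have hx1j₀ : x₁ j₀ = ε := by simp [hx1def, hx2j₀]
  refine ⟨x₁, x₂, ?_, ?_, ?_, ?_⟩
  · -- card x₁ ≤ k
    have hsub1 : (Finset.univ.filter fun j => x₁ j ≠ 0)
        ⊆ insert j₀ (Finset.univ.image js) := by
      intro j hj
      simp only [Finset.mem_filter] at hj
      by_cases hjj : j = j₀
      · simp [hjj]
      · refine Finset.mem_insert_of_mem (Finset.mem_image.mpr ?_)
        by_contra h
        push_neg at h
        have : x₂ j = 0 := hx2zero j fun t => fun he => h t (Finset.mem_univ t) he.symm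
        exact hj.2 (by simp [hx1def, this, hjj])
    calc (Finset.univ.filter fun j => x₁ j ≠ 0).card
        ≤ (insert j₀ (Finset.univ.image js)).card := Finset.card_le_card hsub1
      _ ≤ (Finset.univ.image js).card + 1 := Finset.card_insert_le _ _
      _ ≤ (k - 1) + 1 := by
          have := Finset.card_image_le (s := (Finset.univ : Finset (Fin (k-1)))) (f := js)
          simpa using Nat.add_le_add_right (by simpa using this) 1
      _ = k := Nat.succ_pred_eq_of_pos hk
  · -- card x₂ ≤ k
    have hsub2 : (Finset.univ.filter fun j => x₂ j ≠ 0) ⊆ Finset.univ.image js := by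
      intro j hj
      simp only [Finset.mem_filter] at hj
      by_contra h
      have : x₂ j = 0 := hx2zero j fun t he => h (Finset.mem_image.mpr ⟨t, Finset.mem_univ t, he.symm⟩)
      exact hj.2 this
    calc (Finset.univ.filter fun j => x₂ j ≠ 0).card
        ≤ (Finset.univ.image js).card := Finset.card_le_card hsub2
      _ ≤ k - 1 := by simpa using Finset.card_image_le (s := (Finset.univ : Finset (Fin (k-1)))) (f := js)
      _ ≤ k := Nat.sub_le k 1
  · -- supports differ
    intro h
    have h1 : j₀ ∈ {j | x₁ j ≠ 0} := by simp [hx1j₀, ne_of_gt hε]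
    rw [h] at h1
    exact h1 hx2j₀
  · -- signs agree
    intro i
    by_cases hiS : i ∈ S
    · rw [hx1]
      apply sign_add_of_abs_lt
      have h1 : |A i j₀ * ε| ≤ ε := by
        rw [abs_mul, abs_of_pos hε]
        nlinarith [hA i j₀, abs_nonneg (A i j₀)]
      exact lt_of_le_of_lt h1 (hεlt i hiS)
    · obtain ⟨h1, h2⟩ := hnotS i hiS
      have hz : A.mulVec x₂ i = 0 := by
        rw [hx2]; exact Finset.sum_eq_zero fun t _ => by simp [h1 t]
      rw [hx1, hz, h2]
      ring_nf
end

section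
/- Let n, m, d, k be positive integers and 0 < α < 1. If m ≥ C·(k²/α²)·log n and d = ⌊αm/(2k)⌋ for a sufficiently large absolute constant C, then a random family B_1,...,B_n of independent uniformly random d-subsets of [m] (or subsets formed by including each element independently with probability p = α/(2k)) is, with positive probability, an (n,m,d',k,α)-Robust-UFF after appropriate truncation; in particular, an (n, m, d, k, α)-Robust-UFF exists with m = O(k² log n / α²) and d = O(k log n / α). -/
open Finset

lemma succ_pow_le_three_mul (s : ℕ) : (s + 1) ^ s ≤ 3 * s ^ s := by
  rcases Nat.eq_zero_or_pos s with rfl | hs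
  · norm_num
  have hsr : (0:ℝ) < s := by exact_mod_cast hs
  have key : ((s:ℝ) + 1) ^ s ≤ 3 * (s:ℝ) ^ s := by
    have h1 : ((s:ℝ) + 1) = (s:ℝ) * (1 + 1/(s:ℝ)) := by field_simp
    have h2 : (1 + 1/(s:ℝ)) ^ s ≤ Real.exp (1/(s:ℝ)) ^ s := by
      apply pow_le_pow_left₀ (by positivity)
      have := Real.add_one_le_exp (1/(s:ℝ))
      linarith
    have h3 : Real.exp (1/(s:ℝ)) ^ s = Real.exp 1 := by
      rw [← Real.exp_nat_mul]
      congr 1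
      field_simp
    calc ((s:ℝ) + 1) ^ s = (s:ℝ) ^ s * (1 + 1/(s:ℝ)) ^ s := by rw [h1, mul_pow]
      _ ≤ (s:ℝ) ^ s * Real.exp 1 := by
          rw [← h3]; exact mul_le_mul_of_nonneg_left h2 (by positivity)
      _ ≤ (s:ℝ) ^ s * 3 := by
          exact mul_le_mul_of_nonneg_left (le_of_lt (lt_trans Real.exp_one_lt_d9 (by norm_num))) (by positivity)
      _ = 3 * (s:ℝ) ^ s := by ring
  have : (((s + 1) ^ s : ℕ) : ℝ) ≤ ((3 * s ^ s : ℕ) : ℝ) := by push_cast; exact key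
  exact_mod_cast this

lemma pow_self_le (s : ℕ) : s ^ s ≤ 3 ^ s * Nat.factorial s := by
  induction s with
  | zero => simp
  | succ s ih =>
    calc (s+1)^(s+1) = (s+1) * (s+1)^s := by ring
      _ ≤ (s+1) * (3 * s^s) := Nat.mul_le_mul_left _ (succ_pow_le_three_mul s)
      _ ≤ (s+1) * (3 * (3^s * Nat.factorial s)) := by
          exact Nat.mul_le_mul_left _ (Nat.mul_le_mul_left _ ih)
      _ = 3^(s+1) * Nat.factorial (s+1) := by rw [Nat.factorial_succ]; ring

-- C(m,d) * (d)_s = C(m-s,d-s) * (m)_s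
lemma choose_descFactorial (s : ℕ) : ∀ d m : ℕ, s ≤ d → d ≤ m →
    Nat.choose m d * Nat.descFactorial d s = Nat.choose (m - s) (d - s) * Nat.descFactorial m s := by
  induction s with
  | zero => simp
  | succ s ih =>
    intro d m hsd hdm
    rcases d with _ | d; · omega
    rcases m with _ | m; · omega
    -- one step: C(m+1,d+1)*(d+1) = C(m,d)*(m+1)
    have step : Nat.choose (m+1) (d+1) * (d+1) = (m+1) * Nat.choose m d :=
      (Nat.add_one_mul_choose_eq m d).symm
    have hsd' : s ≤ d := by omega
    have hdm' : d ≤ m := by omega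
    have ihh := ih d m hsd' hdm'
    calc Nat.choose (m+1) (d+1) * Nat.descFactorial (d+1) (s+1)
        = Nat.choose (m+1) (d+1) * ((d+1) * Nat.descFactorial d s) := by
          rw [Nat.succ_descFactorial_succ]
      _ = (Nat.choose (m+1) (d+1) * (d+1)) * Nat.descFactorial d s := by ring
      _ = ((m+1) * Nat.choose m d) * Nat.descFactorial d s := by rw [step]
      _ = (m+1) * (Nat.choose m d * Nat.descFactorial d s) := by ring
      _ = (m+1) * (Nat.choose (m - s) (d - s) * Nat.descFactorial m s) := by rw [ihh]
      _ = Nat.choose (m - s) (d - s) * ((m+1) * Nat.descFactorial m s) := by ring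
      _ = Nat.choose (m+1 - (s+1)) (d+1 - (s+1)) * Nat.descFactorial (m+1) (s+1) := by
          rw [Nat.succ_descFactorial_succ]
          congr 2 <;> omega

-- number of d-subsets X of Fin m with |X ∩ B0| ≥ s is at most C(d,s) * C(m-s, d-s)
lemma count_bad {m : ℕ} (d s : ℕ) (B0 : Finset (Fin m)) (hB0 : B0.card = d) :
    ((Finset.univ.powersetCard d).filter (fun X => s ≤ (X ∩ B0).card)).card
      ≤ Nat.choose d s * Nat.choose (m - s) (d - s) := by
  classical
  have hsub : ((Finset.univ.powersetCard d).filter (fun X => s ≤ (X ∩ B0).card)) ⊆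
      (B0.powersetCard s).biUnion (fun T =>
        ((Finset.univ \ T).powersetCard (d - s)).image (fun R => T ∪ R)) := by
    intro X hX
    simp only [mem_filter, Finset.mem_powersetCard] at hX
    obtain ⟨⟨-, hXcard⟩, hs⟩ := hX
    obtain ⟨T, hT, hTcard⟩ := Finset.exists_subset_card_eq hs
    have hTX : T ⊆ X := hT.trans inter_subset_left
    have hTB : T ⊆ B0 := hT.trans inter_subset_right
    simp only [mem_biUnion, Finset.mem_powersetCard, mem_image]
    refine ⟨T, ⟨hTB, hTcard⟩, X \ T, ⟨?_, ?_⟩, ?_⟩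
    · intro x hx; simp only [mem_sdiff] at hx ⊢; exact ⟨mem_univ _, hx.2⟩
    · rw [card_sdiff_of_subset hTX, hXcard, hTcard]
    · exact Finset.union_sdiff_of_subset hTX
  calc _ ≤ _ := Finset.card_le_card hsub
    _ ≤ ∑ T ∈ B0.powersetCard s,
          (((Finset.univ \ T).powersetCard (d - s)).image (fun R => T ∪ R)).card :=
        Finset.card_biUnion_le
    _ ≤ ∑ T ∈ B0.powersetCard s, Nat.choose (m - s) (d - s) := by
        apply Finset.sum_le_sum
        intro T hT
        simp only [Finset.mem_powersetCard] at hT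
        calc _ ≤ ((Finset.univ \ T).powersetCard (d - s)).card := Finset.card_image_le
          _ = Nat.choose (m - s) (d - s) := by
              rw [Finset.card_powersetCard, card_sdiff_of_subset (subset_univ T), hT.2, card_univ,
                Fintype.card_fin]
    _ = Nat.choose d s * Nat.choose (m - s) (d - s) := by
        rw [Finset.sum_const, Finset.card_powersetCard, hB0, smul_eq_mul]

-- greedy step
lemma greedy_step {m : ℕ} (d s r : ℕ) (hdm : d ≤ m)
    (B : Fin r → Finset (Fin m)) (hB : ∀ i, (B i).card = d)
    (hcount : r * (Nat.choose d s * Nat.choose (m - s) (d - s)) < Nat.choose m d) :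
    ∃ X : Finset (Fin m), X.card = d ∧ ∀ i, (X ∩ B i).card < s := by
  classical
  set T := (Finset.univ.powersetCard d : Finset (Finset (Fin m))) with hT
  set bad := T.filter (fun X => ∃ i, s ≤ (X ∩ B i).card) with hbad
  have hbadcard : bad.card < T.card := by
    have h1 : bad ⊆ (Finset.univ : Finset (Fin r)).biUnion
        (fun i => T.filter (fun X => s ≤ (X ∩ B i).card)) := by
      intro X hX
      simp only [hbad, mem_filter] at hX
      obtain ⟨hXT, i, hi⟩ := hX
      simp only [mem_biUnion, mem_filter]
      exact ⟨i, mem_univ _, hXT, hi⟩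
    calc bad.card ≤ _ := Finset.card_le_card h1
      _ ≤ ∑ i : Fin r, (T.filter (fun X => s ≤ (X ∩ B i).card)).card := Finset.card_biUnion_le
      _ ≤ ∑ _i : Fin r, Nat.choose d s * Nat.choose (m - s) (d - s) := by
          exact Finset.sum_le_sum fun i _ => count_bad d s (B i) (hB i)
      _ = r * (Nat.choose d s * Nat.choose (m - s) (d - s)) := by
          rw [Finset.sum_const, card_univ, Fintype.card_fin, smul_eq_mul]
      _ < Nat.choose m d := hcount
      _ = T.card := by rw [hT, Finset.card_powersetCard, card_univ, Fintype.card_fin]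
  obtain ⟨X, hXT, hXbad⟩ : ∃ X ∈ T, X ∉ bad := by
    by_contra h
    push_neg at h
    exact absurd (Finset.card_le_card fun X hX => h X hX) (not_le.2 hbadcard)
  refine ⟨X, ?_, ?_⟩
  · exact (Finset.mem_powersetCard.1 hXT).2
  · intro i
    by_contra hc
    exact hXbad (Finset.mem_filter.2 ⟨hXT, i, not_lt.1 hc⟩)
lemma greedy_family {m : ℕ} (d s n : ℕ) (hdm : d ≤ m)
    (hcount : n * (Nat.choose d s * Nat.choose (m - s) (d - s)) < Nat.choose m d) :
    ∀ r, r ≤ n → ∃ B : Fin r → Finset (Fin m),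
      (∀ i, (B i).card = d) ∧ ∀ i j, i ≠ j → (B i ∩ B j).card < s := by
  intro r
  induction r with
  | zero => exact fun _ => ⟨Fin.elim0, fun i => i.elim0, fun i => i.elim0⟩
  | succ r ih =>
    intro hr
    obtain ⟨B, hBcard, hBpair⟩ := ih (by omega)
    have hc' : r * (Nat.choose d s * Nat.choose (m - s) (d - s)) < Nat.choose m d :=
      lt_of_le_of_lt (Nat.mul_le_mul_right _ (by omega)) hcount
    obtain ⟨X, hXcard, hXB⟩ := greedy_step d s r hdm B hBcard hc'
    refine ⟨Fin.snoc B X, ?_, ?_⟩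
    · intro i
      refine Fin.lastCases ?_ ?_ i
      · simp [hXcard]
      · intro i; simp [hBcard]
    · intro i j
      refine Fin.lastCases ?_ ?_ i
      · refine Fin.lastCases ?_ ?_ j
        · intro h; exact absurd rfl h
        · intro j' _
          simp only [Fin.snoc_last, Fin.snoc_castSucc]
          exact hXB j'
      · intro i'
        refine Fin.lastCases ?_ ?_ j
        · intro _
          simp only [Fin.snoc_last, Fin.snoc_castSucc]
          rw [inter_comm]
          exact hXB i'
        · intro j' hij
          simp only [Fin.snoc_castSucc]
          exact hBpair i' j' (fun h => hij (by rw [h]))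
-- core counting inequality
lemma core_count (n s d m : ℕ) (hs : 0 < s) (hsd : s ≤ d) (hdm : d ≤ m)
    (hn : n < 2 ^ s) (hm1 : 6 * d * d + 1 ≤ (m + 1 - s) * s) :
    n * (Nat.choose d s * Nat.choose (m - s) (d - s)) < Nat.choose m d := by
  have hd1 : 1 ≤ d := le_trans hs hsd
  have key : n * Nat.choose d s * d.descFactorial s < m.descFactorial s := by
    have hpos : 0 < 3 ^ s * Nat.factorial s := by positivity
    apply Nat.lt_of_mul_lt_mul_right (a := 3 ^ s * Nat.factorial s)
    have hdf : Nat.descFactorial d s = Nat.factorial s * Nat.choose d s :=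
      Nat.descFactorial_eq_factorial_mul_choose d s
    calc n * Nat.choose d s * d.descFactorial s * (3 ^ s * Nat.factorial s)
        = n * (d.descFactorial s * d.descFactorial s) * 3 ^ s := by rw [hdf]; ring
      _ ≤ n * (d ^ s * d ^ s) * 3 ^ s := by
          have := Nat.descFactorial_le_pow d s
          exact Nat.mul_le_mul_right _ (Nat.mul_le_mul_left _ (Nat.mul_le_mul this this))
      _ < 2 ^ s * (d ^ s * d ^ s) * 3 ^ s := by
          have hpos2 : 0 < (d ^ s * d ^ s) * 3 ^ s := by positivity
          calc n * (d ^ s * d ^ s) * 3 ^ s = n * ((d ^ s * d ^ s) * 3 ^ s) := by ring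
            _ < 2 ^ s * ((d ^ s * d ^ s) * 3 ^ s) := by
                exact Nat.mul_lt_mul_of_lt_of_le hn (le_refl _) hpos2
            _ = 2 ^ s * (d ^ s * d ^ s) * 3 ^ s := by ring
      _ = (6 * d * d) ^ s := by rw [show (6:ℕ) * d * d = 2 * (d * d) * 3 by ring]; rw [mul_pow, mul_pow, mul_pow]
      _ < (6 * d * d + 1) ^ s := Nat.pow_lt_pow_left (by omega) (by omega)
      _ ≤ ((m + 1 - s) * s) ^ s := Nat.pow_le_pow_left hm1 s
      _ = (m + 1 - s) ^ s * s ^ s := mul_pow _ _ _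
      _ ≤ m.descFactorial s * (3 ^ s * Nat.factorial s) :=
          Nat.mul_le_mul (Nat.pow_sub_le_descFactorial m s) (pow_self_le s)
  have hchoosepos : 0 < Nat.choose (m - s) (d - s) := Nat.choose_pos (by omega)
  have hdfpos : 0 < d.descFactorial s := Nat.pos_of_ne_zero (fun h => by have := Nat.descFactorial_eq_zero_iff_lt.1 h; omega)
  apply Nat.lt_of_mul_lt_mul_right (a := d.descFactorial s)
  calc n * (Nat.choose d s * Nat.choose (m - s) (d - s)) * d.descFactorial s
      = (n * Nat.choose d s * d.descFactorial s) * Nat.choose (m - s) (d - s) := by ring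
    _ < m.descFactorial s * Nat.choose (m - s) (d - s) :=
        Nat.mul_lt_mul_of_lt_of_le key (le_refl _) hchoosepos
    _ = Nat.choose m d * d.descFactorial s := by
        rw [choose_descFactorial s d m hsd hdm]; ring
set_option maxHeartbeats 2000000 in
lemma robust_uff_exists_aux :
    ∃ C : ℝ, 0 < C ∧
      ∀ (n k : ℕ) (α : ℝ), 2 ≤ n → 1 ≤ k → 0 < α → α < 1 →
        ∃ (m d : ℕ) (B : Fin n → Finset (Fin m)),
          0 < m ∧ 0 < d ∧
          (m : ℝ) ≤ C * k ^ 2 * Real.log n / α ^ 2 ∧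
          (d : ℝ) ≤ C * k * Real.log n / α ∧
          (∀ j, (B j).card = d) ∧
          (∀ j : Fin (k + 1) → Fin n, Function.Injective j →
            (((B (j 0)) ∩ (Finset.univ.biUnion fun i : Fin k => B (j i.succ))).card : ℝ)
              < α * d) := by
  refine ⟨1000, by norm_num, ?_⟩
  intro n k α hn2 hk1 hα0 hα1
  classical
  -- parameters
  obtain ⟨L, hL⟩ : ∃ L, L = Nat.log 2 n := ⟨_, rfl⟩
  obtain ⟨s, hs⟩ : ∃ s, s = L + 1 := ⟨_, rfl⟩
  obtain ⟨d, hd⟩ : ∃ d, d = ⌊(k : ℝ) * (s : ℝ) / α⌋₊ + 1 := ⟨_, rfl⟩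
  obtain ⟨m, hm⟩ : ∃ m, m = s + (6 * d * d) / s + 1 := ⟨_, rfl⟩
  -- basic nat facts
  have hL1 : 1 ≤ L := by
    rw [hL]; exact Nat.le_log_of_pow_le (by norm_num) (by simpa using hn2)
  have hs2 : 2 ≤ s := by omega
  have hns : n < 2 ^ s := by
    rw [hs, hL]; exact Nat.lt_pow_succ_log_self (by norm_num) n
  have hkR : (1:ℝ) ≤ k := by exact_mod_cast hk1
  have hsR2 : (2:ℝ) ≤ s := by exact_mod_cast hs2
  have hkspos : (0:ℝ) < (k : ℝ) * s := by positivity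
  have hks2 : (2:ℝ) ≤ (k:ℝ) * s := by nlinarith
  have hks_floor : k * s ≤ ⌊(k : ℝ) * (s : ℝ) / α⌋₊ := by
    apply Nat.le_floor
    rw [le_div_iff₀ hα0]
    push_cast
    nlinarith
  have hsd : s ≤ d := by
    have h1 : s ≤ k * s := Nat.le_mul_of_pos_left s (by omega)
    omega
  have hd1 : 1 ≤ d := by omega
  have hspos : 0 < s := by omega
  have hdm : d ≤ m := by
    have h1 : d * s ≤ 6 * d * d := by nlinarith
    have h2 : d ≤ 6 * d * d / s := (Nat.le_div_iff_mul_le hspos).2 h1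
    omega
  have hm1 : 6 * d * d + 1 ≤ (m + 1 - s) * s := by
    have hq : s * (6 * d * d / s) + 6 * d * d % s = 6 * d * d := Nat.div_add_mod _ _
    have hr : 6 * d * d % s < s := Nat.mod_lt _ hspos
    have he : m + 1 - s = 6 * d * d / s + 2 := by omega
    rw [he]
    have hexp : (6 * d * d / s + 2) * s = s * (6 * d * d / s) + 2 * s := by ring
    rw [hexp]
    omega
  -- obtain the family
  obtain ⟨B, hBcard, hBpair⟩ := greedy_family d s n hdm
    (core_count n s d m hspos hsd hdm hns hm1) n (le_refl n)
  -- real facts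
  have hnR : (2:ℝ) ≤ n := by exact_mod_cast hn2
  have hlog2 : (0.6931471803 : ℝ) < Real.log 2 := Real.log_two_gt_d9
  have hlogn : Real.log 2 ≤ Real.log n := Real.log_le_log (by norm_num) hnR
  have hlogn_pos : (0:ℝ) < Real.log n := by linarith
  have hLR : (L : ℝ) * Real.log 2 ≤ Real.log n := by
    have h2L : (2:ℕ) ^ L ≤ n := by rw [hL]; exact Nat.pow_log_le_self 2 (by omega)
    have h2LR : ((2:ℝ)) ^ L ≤ (n:ℝ) := by exact_mod_cast h2L
    have := Real.log_le_log (by positivity) h2LR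
    rwa [Real.log_pow] at this
  have hLR2 : (L : ℝ) ≤ 2 * Real.log n := by nlinarith [Nat.cast_nonneg (α := ℝ) L]
  have hsR : (s : ℝ) ≤ 4 * Real.log n := by
    have h1 : (s : ℝ) = (L : ℝ) + 1 := by rw [hs]; push_cast; ring
    have h2 : (1:ℝ) ≤ L := by exact_mod_cast hL1
    nlinarith
  have hfloor_le : ((⌊(k : ℝ) * (s : ℝ) / α⌋₊ : ℕ) : ℝ) ≤ (k : ℝ) * s / α :=
    Nat.floor_le (le_of_lt (div_pos hkspos hα0))
  have hdcast : (d : ℝ) = ((⌊(k : ℝ) * (s : ℝ) / α⌋₊ : ℕ) : ℝ) + 1 := by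
    rw [hd]; push_cast; ring
  have hdR : α * d ≤ 2 * ((k:ℝ) * s) := by
    have h1 : (d : ℝ) ≤ (k:ℝ) * s / α + 1 := by rw [hdcast]; linarith
    have h2 : α * ((k:ℝ) * s / α) = (k:ℝ) * s := by field_simp
    have h3 : α * (d:ℝ) ≤ α * ((k:ℝ) * s / α + 1) := mul_le_mul_of_nonneg_left h1 hα0.le
    have h4 : α * ((k:ℝ) * s / α + 1) = (k:ℝ) * s + α := by rw [mul_add, h2, mul_one]
    linarith
  have hdR_lt : (k:ℝ) * s < α * d := by
    have h1 : (k:ℝ) * s / α < d := by rw [hdcast]; exact Nat.lt_floor_add_one _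
    calc (k:ℝ) * s = α * ((k:ℝ) * s / α) := by field_simp
      _ < α * d := by exact mul_lt_mul_of_pos_left h1 hα0
  -- d bound
  have hdb : (d : ℝ) ≤ 1000 * k * Real.log n / α := by
    rw [le_div_iff₀ hα0]
    have hk0 : (0:ℝ) ≤ k := by linarith
    have h1 : (k:ℝ) * s ≤ (k:ℝ) * (4 * Real.log n) := mul_le_mul_of_nonneg_left hsR hk0
    have h2 : (0:ℝ) ≤ (k:ℝ) * Real.log n := by positivity
    have h3 : (d:ℝ) * α = α * d := by ring
    rw [h3]
    calc α * (d:ℝ) ≤ 2 * ((k:ℝ) * s) := hdR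
      _ ≤ 2 * ((k:ℝ) * (4 * Real.log n)) := by linarith
      _ = 8 * ((k:ℝ) * Real.log n) := by ring
      _ ≤ 1000 * (k:ℝ) * Real.log n := by linarith
  -- m bound
  have hmb : (m : ℝ) ≤ 1000 * k ^ 2 * Real.log n / α ^ 2 := by
    rw [le_div_iff₀ (by positivity)]
    have hcast : ((6 * d * d / s : ℕ) : ℝ) ≤ (6 * (d:ℝ) * d) / (s:ℝ) := by
      calc ((6 * d * d / s : ℕ) : ℝ) ≤ ((6 * d * d : ℕ) : ℝ) / ((s:ℕ) : ℝ) := Nat.cast_div_le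
        _ = (6 * (d:ℝ) * d) / (s:ℝ) := by push_cast; ring
    have hmr : (m : ℝ) ≤ (s:ℝ) + (6 * (d:ℝ) * d) / (s:ℝ) + 1 := by
      have h0 : (m : ℝ) = (s:ℝ) + ((6 * d * d / s : ℕ) : ℝ) + 1 := by rw [hm]; push_cast; ring
      linarith
    have hsposR : (0:ℝ) < s := by linarith
    have hdiv : (6 * (d:ℝ) * d) / (s:ℝ) * α ^ 2 ≤ 96 * (k:ℝ) ^ 2 * Real.log n := by
      rw [div_mul_eq_mul_div, div_le_iff₀ hsposR]
      have hαd_nonneg : 0 ≤ α * (d:ℝ) := by positivity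
      have h1 : (α * d) * (α * d) ≤ (2 * ((k:ℝ) * s)) * (2 * ((k:ℝ) * s)) :=
        mul_le_mul hdR hdR hαd_nonneg (by positivity)
      have h24 : 24 * (k:ℝ)^2 * (s:ℝ) ≤ 96 * (k:ℝ)^2 * Real.log n := by
        calc 24 * (k:ℝ)^2 * (s:ℝ) = 24 * (k:ℝ)^2 * (s:ℝ) := rfl
          _ ≤ 24 * (k:ℝ)^2 * (4 * Real.log n) :=
              mul_le_mul_of_nonneg_left hsR (by positivity)
          _ = 96 * (k:ℝ)^2 * Real.log n := by ring
      calc 6 * (d:ℝ) * d * α ^ 2 = 6 * ((α * d) * (α * d)) := by ring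
        _ ≤ 6 * ((2 * ((k:ℝ) * s)) * (2 * ((k:ℝ) * s))) := by linarith
        _ = (24 * (k:ℝ)^2 * (s:ℝ)) * (s:ℝ) := by ring
        _ ≤ (96 * (k:ℝ)^2 * Real.log n) * (s:ℝ) :=
            mul_le_mul_of_nonneg_right h24 (by linarith)
        _ = 96 * (k:ℝ)^2 * Real.log n * s := by ring
    have hα2 : α ^ 2 ≤ 1 := by nlinarith
    have h5 : ((s:ℝ) + 1) * α ^ 2 ≤ 6 * Real.log n := by
      have ha : ((s:ℝ) + 1) * α ^ 2 ≤ ((s:ℝ) + 1) * 1 :=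
        mul_le_mul_of_nonneg_left hα2 (by linarith)
      have hb : (1:ℝ) ≤ 2 * Real.log n := by linarith
      linarith
    have hk2 : (1:ℝ) ≤ (k:ℝ)^2 := by nlinarith
    have h7 : Real.log n ≤ (k:ℝ)^2 * Real.log n := le_mul_of_one_le_left hlogn_pos.le hk2
    have hmm : (m:ℝ) * α ^ 2 ≤ ((s:ℝ) + (6 * (d:ℝ) * d) / (s:ℝ) + 1) * α ^ 2 :=
      mul_le_mul_of_nonneg_right hmr (by positivity)
    have he : ((s:ℝ) + (6 * (d:ℝ) * d) / (s:ℝ) + 1) * α ^ 2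
        = ((s:ℝ) + 1) * α ^ 2 + (6 * (d:ℝ) * d) / (s:ℝ) * α ^ 2 := by ring
    rw [he] at hmm
    linarith
  refine ⟨m, d, B, by omega, by omega, hmb, hdb, hBcard, ?_⟩
  -- robustness
  intro j hj
  have hinter : B (j 0) ∩ (Finset.univ.biUnion fun i : Fin k => B (j i.succ))
      = Finset.univ.biUnion fun i : Fin k => B (j 0) ∩ B (j i.succ) :=
    Finset.inter_biUnion _ _ _
  have hcard : (B (j 0) ∩ (Finset.univ.biUnion fun i : Fin k => B (j i.succ))).card
      ≤ k * (s - 1) := by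
    rw [hinter]
    calc _ ≤ ∑ i : Fin k, (B (j 0) ∩ B (j i.succ)).card := Finset.card_biUnion_le
      _ ≤ Finset.univ.card • (s - 1) := by
          apply Finset.sum_le_card_nsmul
          intro i _
          have hne : j 0 ≠ j i.succ := fun h => Fin.succ_ne_zero i (hj h).symm
          have := hBpair (j 0) (j i.succ) hne
          omega
      _ = k * (s - 1) := by rw [card_univ, Fintype.card_fin, smul_eq_mul]
  have hcardR : ((B (j 0) ∩ (Finset.univ.biUnion fun i : Fin k => B (j i.succ))).card : ℝ)
      ≤ (k:ℝ) * ((s:ℝ) - 1) := by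
    have h1 : ((k * (s-1) : ℕ) : ℝ) = (k:ℝ) * ((s:ℝ) - 1) := by
      push_cast [Nat.cast_sub (by omega : 1 ≤ s)]
      ring
    calc _ ≤ ((k * (s-1) : ℕ) : ℝ) := by exact_mod_cast hcard
      _ = (k:ℝ) * ((s:ℝ) - 1) := h1
  calc _ ≤ (k:ℝ) * ((s:ℝ) - 1) := hcardR
    _ < (k:ℝ) * s := by nlinarith
    _ < α * d := hdR_lt


/-- An (n,m,d,k,α)-Robust-UFF exists with m = O(k² log n / α²) and
d = O(k log n / α). -/
theorem robust_uff_exists :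
    ∃ C : ℝ, 0 < C ∧
      ∀ (n k : ℕ) (α : ℝ), 2 ≤ n → 1 ≤ k → 0 < α → α < 1 →
        ∃ (m d : ℕ) (B : Fin n → Finset (Fin m)),
          0 < m ∧ 0 < d ∧
          (m : ℝ) ≤ C * k ^ 2 * Real.log n / α ^ 2 ∧
          (d : ℝ) ≤ C * k * Real.log n / α ∧
          (∀ j, (B j).card = d) ∧
          (∀ j : Fin (k + 1) → Fin n, Function.Injective j →
            (((B (j 0)) ∩ (Finset.univ.biUnion fun i : Fin k => B (j i.succ))).card : ℝ)
              < α * d) := robust_uff_exists_aux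
end
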